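/- arXiv:2305.02940 — 4 statements merged into one kernel-verified Lean document; each statement's English description precedes it below -/
import Mathlib

section
/- Let V be a finite-dimensional vector space with an alternating bilinear form Ψ and let S ≤ V be a totally isotropic subspace (Ψ vanishes on S × S). Then dim(S) ≤ (dim(V) + dim(S ∩ Rad(V)))/2. -/
/-!
Apply the dimension formula `dim W + dim W^⊥ = dim V + dim (W ∩ Rad)` to the flipped form, whose
orthogonal of `S` contains `S` by isotropy and whose kernel is the radical `Ψ.orthogonal ⊤`.
-/

theorem LinearMap.BilinForm.ker_flip {K V : Type*} [Field K] [AddCommGroup V] [Module K V]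
    (B : LinearMap.BilinForm K V) : B.flip.ker = B.orthogonal ⊤ := by
  ext v
  simp [LinearMap.ext_iff, LinearMap.BilinForm.mem_orthogonal_iff]

theorem stmt_2_general {K V : Type*} [Field K] [AddCommGroup V] [Module K V] [FiniteDimensional K V]
    (Ψ : LinearMap.BilinForm K V) (S : Submodule K V)
    (hS : ∀ s ∈ S, ∀ s' ∈ S, Ψ s s' = 0) :
    2 * Module.finrank K S ≤ Module.finrank K V + Module.finrank K ↥(S ⊓ Ψ.orthogonal ⊤) := by
  have hS_le : S ≤ Ψ.flip.orthogonal S := fun s hs s' hs' => hS s hs s' hs'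
  have hdim := LinearMap.BilinForm.finrank_add_finrank_orthogonal' (B := Ψ.flip) S
  rw [LinearMap.BilinForm.ker_flip] at hdim
  have := Submodule.finrank_mono hS_le
  omega

theorem stmt_2 {K V : Type*} [Field K] [AddCommGroup V] [Module K V] [FiniteDimensional K V]
    (Ψ : LinearMap.BilinForm K V) (hΨ : Ψ.IsAlt) (S : Submodule K V)
    (hS : ∀ s ∈ S, ∀ s' ∈ S, Ψ s s' = 0) :
    2 * Module.finrank K S ≤ Module.finrank K V + Module.finrank K ↥(S ⊓ Ψ.orthogonal ⊤) :=
  stmt_2_general Ψ S hS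
end

section
/- Let V be a symplectic space of dimension 2n over the finite field F_q with n ≥ 1. Then the number of 2-dimensional subspaces of V on which the symplectic form is non-degenerate equals q^{2n-2}(q^{2n}-1)/(q^2-1). -/
/-!
Double count the hyperbolic pairs `(u, v)`, i.e. those with `Ψ u v = 1`. By non-degeneracy, for
each `u ≠ 0` the admissible `v` form an affine hyperplane, so there are `(q^(2n) - 1) q^(2n-1)`
of them. An alternating form makes a hyperbolic pair linearly independent and its span a
non-degenerate plane `W`; the pairs spanning a given `W` are exactly the hyperbolic pairs of `W`,
of which there are `(q^2 - 1) q` by the same count in dimension 2.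
-/

open Module Submodule

theorem Nat.card_eq_card_mul_of_card_fiber {α β : Type*} [Finite α] [Finite β] (f : α → β)
    {k : ℕ} (hk : ∀ b, Nat.card {a // f a = b} = k) : Nat.card α = Nat.card β * k := by
  have := Fintype.ofFinite β
  rw [← Nat.card_congr (Equiv.sigmaFiberEquiv f), Nat.card_sigma]
  simp [hk, Nat.card_eq_fintype_card]

namespace LinearMap

variable {K U : Type*} [Field K] [Fintype K] [AddCommGroup U] [Module K U] [FiniteDimensional K U]

theorem card_apply_eq_one {f : U →ₗ[K] K} (hf : f ≠ 0) :
    Nat.card {v // f v = 1} = Fintype.card K ^ (finrank K U - 1) := by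
  obtain ⟨v₁, hv₁⟩ := LinearMap.surjective hf 1
  have e : {v // f v = 1} ≃ ker f :=
    (Equiv.subRight v₁).subtypeEquiv fun v => by simp [hv₁, sub_eq_zero]
  rw [Nat.card_congr e, Module.natCard_eq_pow_finrank (K := K), Nat.card_eq_fintype_card,
    ← Dual.finrank_ker_add_one_of_ne_zero hf, Nat.add_sub_cancel]

namespace BilinForm

theorem card_apply_eq_one_of_separatingLeft {B : LinearMap.BilinForm K U}
    (hB : B.SeparatingLeft) :
    Nat.card {p : U × U // B p.1 p.2 = 1} =
      (Fintype.card K ^ finrank K U - 1) * Fintype.card K ^ (finrank K U - 1) := by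
  classical
  have : Finite U := Module.finite_of_finite K
  have : Fintype U := Fintype.ofFinite U
  have hfiber (u : U) (hu : u ≠ 0) :
      Nat.card {v // B u v = 1} = Fintype.card K ^ (finrank K U - 1) :=
    card_apply_eq_one fun h => hu (hB u fun v => by simp [h])
  rw [Nat.card_congr (Equiv.subtypeProdEquivSigmaSubtype fun u v => B u v = 1), Nat.card_sigma,
    Fintype.sum_eq_add_sum_compl 0, Finset.sum_congr rfl fun u hu => hfiber u (by simpa using hu)]
  simp only [map_zero, LinearMap.zero_apply, zero_ne_one, Nat.card_of_isEmpty, Finset.sum_const,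
    Finset.card_compl, Finset.card_singleton, smul_eq_mul, zero_add, ← Module.card_eq_pow_finrank]

end BilinForm
end LinearMap

namespace LinearMap.BilinForm.IsAlt

variable {K V : Type*} [Field K] [AddCommGroup V] [Module K V] {Ψ : LinearMap.BilinForm K V}
  {u v : V}

theorem apply_smul_add_smul_right (hΨ : Ψ.IsAlt) (h : Ψ u v = 1) (s t : K) :
    Ψ (s • u + t • v) v = s := by
  simp [hΨ v, h]

theorem apply_smul_add_smul_left (hΨ : Ψ.IsAlt) (h : Ψ u v = 1) (s t : K) :
    Ψ (s • u + t • v) u = -t := by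
  simp [hΨ u, ← hΨ.neg_eq u v, h]

theorem linearIndependent_pair (hΨ : Ψ.IsAlt) (h : Ψ u v = 1) : LinearIndependent K ![u, v] :=
  LinearIndependent.pair_iff.mpr fun s t hst => by
    have hs := hΨ.apply_smul_add_smul_right h s t
    have ht := hΨ.apply_smul_add_smul_left h s t
    simp only [hst, LinearMap.map_zero₂] at hs ht
    exact ⟨hs.symm, neg_eq_zero.mp ht.symm⟩

theorem finrank_span_pair (hΨ : Ψ.IsAlt) (h : Ψ u v = 1) : finrank K (span K {u, v}) = 2 := by
  rw [← Matrix.range_cons_cons_empty u v ![], finrank_span_eq_card (hΨ.linearIndependent_pair h),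
    Fintype.card_fin]

theorem nondegenerate_restrict_span_pair (hΨ : Ψ.IsAlt) (h : Ψ u v = 1) :
    (Ψ.restrict (span K {u, v})).Nondegenerate := by
  refine (LinearMap.IsRefl.nondegenerate_iff_separatingLeft (B := Ψ.restrict (span K {u, v}))
    fun x y => hΨ.isRefl x y).mpr fun m hm => ?_
  obtain ⟨s, t, hm_eq⟩ := mem_span_pair.mp m.2
  have hs : Ψ m v = 0 := hm ⟨v, subset_span (by simp)⟩
  have ht : Ψ m u = 0 := hm ⟨u, subset_span (by simp)⟩
  rw [← hm_eq, hΨ.apply_smul_add_smul_right h] at hs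
  rw [← hm_eq, hΨ.apply_smul_add_smul_left h, neg_eq_zero] at ht
  ext
  simp [← hm_eq, hs, ht]

theorem span_pair_eq_iff (hΨ : Ψ.IsAlt) (h : Ψ u v = 1) {W : Submodule K V}
    (hW : finrank K W = 2) : span K {u, v} = W ↔ u ∈ W ∧ v ∈ W := by
  have : FiniteDimensional K W := .of_finrank_pos (by omega)
  refine ⟨fun hspan => hspan ▸ ⟨subset_span (by simp), subset_span (by simp)⟩,
    fun ⟨hu, hv⟩ => eq_of_le_of_finrank_eq ?_ (by rw [hΨ.finrank_span_pair h, hW])⟩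
  rw [span_le, Set.insert_subset_iff, Set.singleton_subset_iff]
  exact ⟨hu, hv⟩

def spanHyperbolicPair (hΨ : Ψ.IsAlt) (p : {p : V × V // Ψ p.1 p.2 = 1}) :
    {W : Submodule K V // finrank K W = 2 ∧ (Ψ.restrict W).Nondegenerate} :=
  ⟨span K {p.1.1, p.1.2}, hΨ.finrank_span_pair p.2, hΨ.nondegenerate_restrict_span_pair p.2⟩

def spanHyperbolicPairFiberEquiv (hΨ : Ψ.IsAlt)
    (W : {W : Submodule K V // finrank K W = 2 ∧ (Ψ.restrict W).Nondegenerate}) :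
    {p // hΨ.spanHyperbolicPair p = W} ≃ {p : W.1 × W.1 // Ψ.restrict W.1 p.1 p.2 = 1} where
  toFun p :=
    have hmem := (hΨ.span_pair_eq_iff p.1.2 W.2.1).mp (congrArg Subtype.val p.2)
    ⟨(⟨p.1.1.1, hmem.1⟩, ⟨p.1.1.2, hmem.2⟩), p.1.2⟩
  invFun p :=
    ⟨⟨(p.1.1, p.1.2), p.2⟩, Subtype.ext ((hΨ.span_pair_eq_iff p.2 W.2.1).mpr ⟨p.1.1.2, p.1.2.2⟩)⟩
  left_inv _ := rfl
  right_inv _ := rfl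

end LinearMap.BilinForm.IsAlt

open LinearMap.BilinForm

theorem stmt_5 {K V : Type*} [Field K] [Fintype K] [AddCommGroup V] [Module K V]
    (q n : ℕ) (hq : Fintype.card K = q) (hn : 1 ≤ n)
    (hV : Module.finrank K V = 2 * n)
    (Ψ : LinearMap.BilinForm K V) (hΨ : Ψ.IsAlt) (hnd : Ψ.Nondegenerate) :
    Nat.card {W : Submodule K V //
        Module.finrank K W = 2 ∧ (Ψ.restrict W).Nondegenerate} * (q ^ 2 - 1) =
      q ^ (2 * n - 2) * (q ^ (2 * n) - 1) := by
  have : FiniteDimensional K V := .of_finrank_pos (by omega)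
  have : Finite V := Module.finite_of_finite K
  have hcount := Nat.card_eq_card_mul_of_card_fiber hΨ.spanHyperbolicPair fun W => by
    rw [Nat.card_congr (hΨ.spanHyperbolicPairFiberEquiv W),
      card_apply_eq_one_of_separatingLeft W.2.2.1, W.2.1]
  rw [card_apply_eq_one_of_separatingLeft hnd.1, hV, hq] at hcount
  have hpow : q ^ (2 * n - 1) = q ^ (2 * n - 2) * q := by
    rw [← pow_succ]
    congr 1
    omega
  apply Nat.eq_of_mul_eq_mul_right (hq ▸ Fintype.card_pos : 0 < q)
  rw [pow_one, hpow] at hcount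
  linarith
end

section
/- Let V be a symplectic space of dimension 2n over a field K with n ≥ 4. Then the orthogonality graph G(V) has diameter 2: any two distinct non-adjacent 2-dimensional non-degenerate subspaces S, W admit a common orthogonal 2-dimensional non-degenerate subspace T with T ⊥ S and T ⊥ W. -/
/-!
Let `U = S ⊔ W`, of dimension at most `4 ≤ n`. Any two vectors `u, v ∈ U^⊥` with `Ψ u v ≠ 0` span
a non-degenerate plane orthogonal to both `S` and `W`. If no such pair existed, `U^⊥` would be
totally isotropic, so `U^⊥ ≤ U^⊥⊥ = U`; as `dim U^⊥ = 2n - dim U ≥ dim U` this forces `U^⊥ = U`,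
making `U`, and with it the non-degenerate plane `S`, totally isotropic.
-/

open Module Submodule

namespace LinearMap.BilinForm

variable {K V : Type*} [Field K] [AddCommGroup V] [Module K V] {Ψ : LinearMap.BilinForm K V}

section Alternating

variable {u v : V}

theorem IsAlt.eq_zero_of_apply_smul_add_smul (hΨ : Ψ.IsAlt) (huv : Ψ u v ≠ 0) {a b : K}
    (hv : Ψ (a • u + b • v) v = 0) (hu : Ψ u (a • u + b • v) = 0) : a = 0 ∧ b = 0 := by
  simp only [map_add, map_smul, LinearMap.add_apply, LinearMap.smul_apply, smul_eq_mul,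
    hΨ.self_eq_zero, mul_zero, add_zero, zero_add] at hv hu
  exact ⟨(mul_eq_zero.1 hv).resolve_right huv, (mul_eq_zero.1 hu).resolve_right huv⟩

theorem IsAlt.linearIndependent_pair_s14 (hΨ : Ψ.IsAlt) (huv : Ψ u v ≠ 0) :
    LinearIndependent K ![u, v] :=
  LinearIndependent.pair_iff.2 fun a b hab ↦
    hΨ.eq_zero_of_apply_smul_add_smul huv (by simp [hab]) (by simp [hab])

theorem IsAlt.finrank_span_pair_s14 (hΨ : Ψ.IsAlt) (huv : Ψ u v ≠ 0) :
    finrank K (span K {u, v}) = 2 := by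
  have hrange : Set.range ![u, v] = {u, v} := by
    rw [Matrix.range_cons, Matrix.range_cons_empty, Set.singleton_union]
  rw [← hrange, finrank_span_eq_card (hΨ.linearIndependent_pair_s14 huv), Fintype.card_fin]

theorem IsAlt.nondegenerate_restrict_span_pair_s14 (hΨ : Ψ.IsAlt) (huv : Ψ u v ≠ 0) :
    (Ψ.restrict (span K {u, v})).Nondegenerate := by
  refine (LinearMap.IsRefl.nondegenerate_iff_separatingLeft (B := Ψ.restrict (span K {u, v}))
    fun x y h ↦ hΨ.isRefl _ _ h).2 fun x hx ↦ ?_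
  obtain ⟨a, b, hab⟩ := mem_span_pair.1 x.2
  have hxv : Ψ x v = 0 := by simpa using hx ⟨v, subset_span (by simp)⟩
  have hux : Ψ u x = 0 := hΨ.isRefl _ _ (by simpa using hx ⟨u, subset_span (by simp)⟩)
  rw [← hab] at hxv hux
  obtain ⟨rfl, rfl⟩ := hΨ.eq_zero_of_apply_smul_add_smul huv hxv hux
  ext
  simp [← hab]

end Alternating

variable [FiniteDimensional K V]

theorem le_orthogonal_self_of_orthogonal_le (hrefl : Ψ.IsRefl) (hnd : Ψ.Nondegenerate)
    {U : Submodule K V} (hU : 2 * finrank K U ≤ finrank K V)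
    (hiso : Ψ.orthogonal U ≤ Ψ.orthogonal (Ψ.orthogonal U)) : U ≤ Ψ.orthogonal U := by
  rw [orthogonal_orthogonal hnd hrefl] at hiso
  have hdim : finrank K U ≤ finrank K (Ψ.orthogonal U) := by
    rw [finrank_orthogonal hnd]
    omega
  exact (eq_of_le_of_finrank_le hiso hdim).ge

theorem exists_mem_orthogonal_apply_ne_zero (hrefl : Ψ.IsRefl) (hnd : Ψ.Nondegenerate)
    {S U : Submodule K V} (hSU : S ≤ U) [Nontrivial S] (hSnd : (Ψ.restrict S).Nondegenerate)
    (hU : 2 * finrank K U ≤ finrank K V) :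
    ∃ u ∈ Ψ.orthogonal U, ∃ v ∈ Ψ.orthogonal U, Ψ u v ≠ 0 := by
  by_contra! hiso
  have hUU : U ≤ Ψ.orthogonal U := le_orthogonal_self_of_orthogonal_le hrefl hnd hU
    fun x hx y hy ↦ hrefl _ _ (hiso x hx y hy)
  have hSS : S ≤ Ψ.orthogonal S := hSU.trans (hUU.trans (orthogonal_le hSU))
  have hS : S = ⊥ :=
    ((restrict_nondegenerate_iff_isCompl_orthogonal hrefl).1 hSnd).disjoint.eq_bot_of_le hSS
  exact not_nontrivial_iff_subsingleton.2 (subsingleton_iff_eq_bot.2 hS) ‹_›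

end LinearMap.BilinForm

open LinearMap.BilinForm

theorem stmt_14_general {K V : Type*} [Field K] [AddCommGroup V] [Module K V]
    (n : ℕ) (hn : 4 ≤ n) (hV : Module.finrank K V = 2 * n)
    (Ψ : LinearMap.BilinForm K V) (hΨ : Ψ.IsAlt) (hnd : Ψ.Nondegenerate)
    (S W : Submodule K V)
    (hS2 : Module.finrank K S = 2) (hSnd : (Ψ.restrict S).Nondegenerate)
    (hW2 : Module.finrank K W = 2) :
    ∃ T : Submodule K V, Module.finrank K T = 2 ∧ (Ψ.restrict T).Nondegenerate ∧
      (∀ t ∈ T, ∀ s ∈ S, Ψ t s = 0) ∧ (∀ t ∈ T, ∀ w ∈ W, Ψ t w = 0) := by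
  have : FiniteDimensional K V := .of_finrank_pos (by omega)
  have : Nontrivial S := Module.nontrivial_of_finrank_pos (R := K) (by omega)
  have hU : 2 * finrank K ↥(S ⊔ W) ≤ finrank K V := by
    have := finrank_add_le_finrank_add_finrank S W
    omega
  obtain ⟨u, hu, v, hv, huv⟩ :=
    exists_mem_orthogonal_apply_ne_zero hΨ.isRefl hnd le_sup_left hSnd hU
  have hT : span K {u, v} ≤ Ψ.orthogonal (S ⊔ W) :=
    span_le.2 (Set.insert_subset hu (Set.singleton_subset_iff.2 hv))
  refine ⟨span K {u, v}, hΨ.finrank_span_pair_s14 huv, hΨ.nondegenerate_restrict_span_pair_s14 huv,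
    fun t ht s hs ↦ ?_, fun t ht w hw ↦ ?_⟩
  · exact hΨ.isRefl _ _ (hT ht s (mem_sup_left hs))
  · exact hΨ.isRefl _ _ (hT ht w (mem_sup_right hw))

theorem stmt_14 {K V : Type*} [Field K] [AddCommGroup V] [Module K V]
    (n : ℕ) (hn : 4 ≤ n) (hV : Module.finrank K V = 2 * n)
    (Ψ : LinearMap.BilinForm K V) (hΨ : Ψ.IsAlt) (hnd : Ψ.Nondegenerate)
    (S W : Submodule K V)
    (hS2 : Module.finrank K S = 2) (hSnd : (Ψ.restrict S).Nondegenerate)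
    (hW2 : Module.finrank K W = 2) (hWnd : (Ψ.restrict W).Nondegenerate)
    (hSW : S ≠ W) (hnadj : ¬ ∀ s ∈ S, ∀ w ∈ W, Ψ s w = 0) :
    ∃ T : Submodule K V, Module.finrank K T = 2 ∧ (Ψ.restrict T).Nondegenerate ∧
      (∀ t ∈ T, ∀ s ∈ S, Ψ t s = 0) ∧ (∀ t ∈ T, ∀ w ∈ W, Ψ t w = 0) :=
  stmt_14_general n hn hV Ψ hΨ hnd S W hS2 hSnd hW2
end

section
/- For q ≥ 2 a real number and integers 3 ≤ j < i, define P_j(q) = (q^{2j−2} − 1)/(q^{j−2}(q² − 1)) + j − 1. Then P_j(q) + (i − j) < P_i(q). -/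
/-! The fraction in `P_j(q)` is the symmetric quantum integer `[j - 1]_q = (q^n - q^{-n}) / (q - q^{-1})`
at `n = j - 1`, and for `q > 1` this is strictly increasing in `n`: `q^n` grows while `q^{-n}` shrinks.
Hence `P_j(q) - j < P_i(q) - i`. -/

noncomputable def symmQInt (q : ℝ) (n : ℕ) : ℝ := (q ^ n - q⁻¹ ^ n) / (q - q⁻¹)

lemma symmQInt_strictMono {q : ℝ} (hq : 1 < q) : StrictMono (symmQInt q) := by
  have hden : 0 < q - q⁻¹ := sub_pos.mpr ((inv_lt_one_of_one_lt₀ hq).trans hq)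
  intro m n hmn
  have hpow : q ^ m < q ^ n := pow_lt_pow_right₀ hq hmn
  have hpow_inv : q⁻¹ ^ n < q⁻¹ ^ m :=
    pow_lt_pow_right_of_lt_one₀ (by positivity) (inv_lt_one_of_one_lt₀ hq) hmn
  unfold symmQInt
  gcongr

lemma div_eq_symmQInt {q : ℝ} (hq : q ≠ 0) {j : ℕ} (hj : 2 ≤ j) :
    (q ^ (2 * j - 2) - 1) / (q ^ (j - 2) * (q ^ 2 - 1)) = symmQInt q (j - 1) := by
  obtain ⟨n, rfl⟩ : ∃ n, j = n + 2 := ⟨j - 2, by omega⟩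
  rw [show 2 * (n + 2) - 2 = 2 * (n + 1) by omega, show n + 2 - 2 = n by omega,
    show n + 2 - 1 = n + 1 by omega, symmQInt, inv_pow]
  -- at `q = ±1` both denominators vanish and both sides are the junk value `0`
  by_cases hq2 : q ^ 2 = 1
  · have : q - q⁻¹ = 0 := by field_simp; linarith
    simp [hq2, this]
  · have hden : q - q⁻¹ ≠ 0 := fun h => hq2 (by field_simp at h; linarith)
    have hden' : q ^ 2 - 1 ≠ 0 := sub_ne_zero.mpr hq2
    field_simp
    ring

theorem stmt_16 (q : ℝ) (hq : 2 ≤ q) (i j : ℕ) (hj : 3 ≤ j) (hij : j < i) :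
    (q ^ (2 * j - 2) - 1) / (q ^ (j - 2) * (q ^ 2 - 1)) + (j : ℝ) - 1 + ((i : ℝ) - j) <
      (q ^ (2 * i - 2) - 1) / (q ^ (i - 2) * (q ^ 2 - 1)) + (i : ℝ) - 1 := by
  have hq0 : q ≠ 0 := by positivity
  rw [div_eq_symmQInt hq0 (by omega), div_eq_symmQInt hq0 (by omega)]
  have := symmQInt_strictMono (by linarith : 1 < q) (show j - 1 < i - 1 by omega)
  linarith
end
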